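/- arXiv:0807.3593 — 3 statements merged into one kernel-verified Lean document; each statement's English description precedes it below -/
import Mathlib

section
/- Let U, V, W₁, W₂, Y₁, Y₂ be random variables on a common probability space taking values in finite sets. If I(W₂;Y₁|(U,W₁)) = I(W₁;Y₂|(U,W₂)) and I(V;Y₂|(U,W₂)) = I(V;Y₂|W₂), then I((U,W₁,W₂);Y₁) + I(V;Y₂|(U,W₁,W₂)) = I(W₁;Y₁) + I(U;Y₁|W₁) + I(W₁;Y₂|(U,V,W₂)) + I(V;Y₂|W₂). -/
open MeasureTheory Real

/-- Shannon entropy (in nats) of a random variable taking values in a finite set. -/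
noncomputable def entropy {Ω : Type*} [MeasurableSpace Ω] (μ : Measure Ω)
    {S : Type*} [Fintype S] (X : Ω → S) : ℝ :=
  ∑ x : S, Real.negMulLog (μ (X ⁻¹' {x})).toReal

/-- Mutual information `I(X;Y) = H(X) + H(Y) - H(X,Y)`. -/
noncomputable def mutualInfo {Ω : Type*} [MeasurableSpace Ω] (μ : Measure Ω)
    {S T : Type*} [Fintype S] [Fintype T] (X : Ω → S) (Y : Ω → T) : ℝ :=
  entropy μ X + entropy μ Y - entropy μ (fun ω => (X ω, Y ω))

/-- Conditional mutual information `I(X;Y|Z) = H(X,Z) + H(Y,Z) - H(X,Y,Z) - H(Z)`. -/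
noncomputable def condMutualInfo {Ω : Type*} [MeasurableSpace Ω] (μ : Measure Ω)
    {S T R : Type*} [Fintype S] [Fintype T] [Fintype R]
    (X : Ω → S) (Y : Ω → T) (Z : Ω → R) : ℝ :=
  entropy μ (fun ω => (X ω, Z ω)) + entropy μ (fun ω => (Y ω, Z ω))
    - entropy μ (fun ω => (X ω, Y ω, Z ω)) - entropy μ Z


/-!
Expand `I((U,W₁,W₂);Y₁)` by the chain rule as `I(W₁;Y₁) + I(U;Y₁|W₁) + I(W₂;Y₁|U,W₁)` and
trade the last term for `I(W₁;Y₂|U,W₂)` using the first hypothesis. Together with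
`I(V;Y₂|U,W₁,W₂)` this is one chain-rule expansion of `I((V,W₁);Y₂|U,W₂)`; the other expansion is
`I(V;Y₂|U,W₂) + I(W₁;Y₂|U,V,W₂)`, and the second hypothesis removes `U` from the first term.
-/

open Function

section InformationIdentities

variable {Ω : Type*} [MeasurableSpace Ω] (μ : Measure Ω)
  {S T R Q : Type*} [Fintype S] [Fintype T] [Fintype R] [Fintype Q]

theorem entropy_eq_of_injective (X : Ω → S) (Y : Ω → T) {f : S → T} (hf : Injective f)
    (hY : ∀ ω, Y ω = f (X ω)) : entropy μ Y = entropy μ X := by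
  obtain rfl : Y = fun ω => f (X ω) := funext hY
  unfold entropy
  symm
  refine Fintype.sum_of_injective f hf _ _ (fun t ht => ?_) (fun s => ?_)
  · have hempty : (fun ω => f (X ω)) ⁻¹' {t} = ∅ :=
      Set.eq_empty_of_forall_notMem fun ω hω => ht ⟨X ω, hω⟩
    simp [hempty]
  · have hfiber : (fun ω => f (X ω)) ⁻¹' {f s} = X ⁻¹' {s} := by
      ext ω
      simp [hf.eq_iff]
    rw [hfiber]

theorem mutualInfo_comp_left_of_injective (X : Ω → S) (Y : Ω → T) {f : S → R}
    (hf : Injective f) :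
    mutualInfo μ (fun ω => f (X ω)) Y = mutualInfo μ X Y := by
  simp only [mutualInfo]
  rw [entropy_eq_of_injective μ X _ hf fun _ => rfl,
    entropy_eq_of_injective μ (fun ω => (X ω, Y ω)) (fun ω => (f (X ω), Y ω))
      (hf.prodMap injective_id) fun _ => rfl]

theorem condMutualInfo_comp_left_of_injective (X : Ω → S) (Y : Ω → T) (Z : Ω → R)
    {f : S → Q} (hf : Injective f) :
    condMutualInfo μ (fun ω => f (X ω)) Y Z = condMutualInfo μ X Y Z := by
  simp only [condMutualInfo]
  rw [entropy_eq_of_injective μ (fun ω => (X ω, Z ω)) (fun ω => (f (X ω), Z ω))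
      (hf.prodMap injective_id) fun _ => rfl,
    entropy_eq_of_injective μ (fun ω => (X ω, Y ω, Z ω)) (fun ω => (f (X ω), Y ω, Z ω))
      (hf.prodMap injective_id) fun _ => rfl]

theorem condMutualInfo_comp_cond_of_injective (X : Ω → S) (Y : Ω → T) (Z : Ω → R)
    {f : R → Q} (hf : Injective f) :
    condMutualInfo μ X Y (fun ω => f (Z ω)) = condMutualInfo μ X Y Z := by
  simp only [condMutualInfo]
  rw [entropy_eq_of_injective μ (fun ω => (X ω, Z ω)) (fun ω => (X ω, f (Z ω)))
      (injective_id.prodMap hf) fun _ => rfl,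
    entropy_eq_of_injective μ (fun ω => (Y ω, Z ω)) (fun ω => (Y ω, f (Z ω)))
      (injective_id.prodMap hf) fun _ => rfl,
    entropy_eq_of_injective μ (fun ω => (X ω, Y ω, Z ω)) (fun ω => (X ω, Y ω, f (Z ω)))
      (injective_id.prodMap (injective_id.prodMap hf)) fun _ => rfl,
    entropy_eq_of_injective μ Z _ hf fun _ => rfl]

theorem mutualInfo_prod_left_eq_add (X : Ω → S) (Z : Ω → R) (Y : Ω → T) :
    mutualInfo μ (fun ω => (X ω, Z ω)) Y = mutualInfo μ Z Y + condMutualInfo μ X Y Z := by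
  have hXZY := entropy_eq_of_injective μ (fun ω => (X ω, Y ω, Z ω))
    (fun ω => ((X ω, Z ω), Y ω)) (f := fun p => ((p.1, p.2.2), p.2.1))
    (fun p q h => by simp_all [Prod.ext_iff]) fun _ => rfl
  have hZY := entropy_eq_of_injective μ (fun ω => (Y ω, Z ω)) (fun ω => (Z ω, Y ω))
    Prod.swap_injective fun _ => rfl
  simp only [mutualInfo, condMutualInfo]
  linarith

theorem condMutualInfo_prod_left_eq_add (X : Ω → S) (Z : Ω → R) (Y : Ω → T) (C : Ω → Q) :
    condMutualInfo μ (fun ω => (X ω, Z ω)) Y C =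
      condMutualInfo μ Z Y C + condMutualInfo μ X Y (fun ω => (Z ω, C ω)) := by
  have hXZC := entropy_eq_of_injective μ (fun ω => (X ω, Z ω, C ω))
    (fun ω => ((X ω, Z ω), C ω)) (f := fun p => ((p.1, p.2.1), p.2.2))
    (fun p q h => by simp_all [Prod.ext_iff]) fun _ => rfl
  have hXZYC := entropy_eq_of_injective μ (fun ω => (X ω, Y ω, Z ω, C ω))
    (fun ω => ((X ω, Z ω), Y ω, C ω)) (f := fun p => ((p.1, p.2.2.1), p.2.1, p.2.2.2))
    (fun p q h => by simp_all [Prod.ext_iff]) fun _ => rfl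
  have hZYC := entropy_eq_of_injective μ (fun ω => (Y ω, Z ω, C ω))
    (fun ω => (Z ω, Y ω, C ω)) (f := fun p => (p.2.1, p.1, p.2.2))
    (fun p q h => by simp_all [Prod.ext_iff]) fun _ => rfl
  simp only [condMutualInfo]
  linarith

theorem condMutualInfo_prod_left_add_comm (X : Ω → S) (Z : Ω → R) (Y : Ω → T) (C : Ω → Q) :
    condMutualInfo μ Z Y C + condMutualInfo μ X Y (fun ω => (Z ω, C ω)) =
      condMutualInfo μ X Y C + condMutualInfo μ Z Y (fun ω => (X ω, C ω)) := by
  rw [← condMutualInfo_prod_left_eq_add, ← condMutualInfo_prod_left_eq_add,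
    ← condMutualInfo_comp_left_of_injective μ (fun ω => (X ω, Z ω)) Y C Prod.swap_injective]
  rfl

end InformationIdentities

theorem stmt_2_general
    {Ω : Type*} [MeasurableSpace Ω] (μ : Measure Ω)
    {SU SV SW₁ SW₂ SY₁ SY₂ : Type*}
    [Fintype SU] [Fintype SV] [Fintype SW₁] [Fintype SW₂] [Fintype SY₁] [Fintype SY₂]
    (U : Ω → SU) (V : Ω → SV) (W₁ : Ω → SW₁) (W₂ : Ω → SW₂) (Y₁ : Ω → SY₁) (Y₂ : Ω → SY₂)
    (h0 : condMutualInfo μ W₂ Y₁ (fun ω => (U ω, W₁ ω)) = condMutualInfo μ W₁ Y₂ (fun ω => (U ω, W₂ ω)))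
    (h1 : condMutualInfo μ V Y₂ (fun ω => (U ω, W₂ ω)) = condMutualInfo μ V Y₂ W₂)
    : mutualInfo μ (fun ω => (U ω, W₁ ω, W₂ ω)) Y₁ + condMutualInfo μ V Y₂ (fun ω => (U ω, W₁ ω, W₂ ω)) = mutualInfo μ W₁ Y₁ + condMutualInfo μ U Y₁ W₁ + condMutualInfo μ W₁ Y₂ (fun ω => (U ω, V ω, W₂ ω)) + condMutualInfo μ V Y₂ W₂ := by
  have hY₁ : mutualInfo μ (fun ω => (U ω, W₁ ω, W₂ ω)) Y₁ =
      mutualInfo μ W₁ Y₁ + condMutualInfo μ U Y₁ W₁ +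
        condMutualInfo μ W₂ Y₁ (fun ω => (U ω, W₁ ω)) := by
    rw [← mutualInfo_prod_left_eq_add, ← mutualInfo_prod_left_eq_add,
      ← mutualInfo_comp_left_of_injective μ (fun ω => (U ω, W₁ ω, W₂ ω)) Y₁
        (f := fun p => (p.2.2, p.1, p.2.1)) fun p q h => by simp_all [Prod.ext_iff]]
  have hY₂ := condMutualInfo_prod_left_add_comm μ V W₁ Y₂ (fun ω => (U ω, W₂ ω))
  rw [condMutualInfo_comp_cond_of_injective μ V Y₂ (fun ω => (U ω, W₁ ω, W₂ ω))
      (f := fun p => (p.2.1, p.1, p.2.2)) fun p q h => by simp_all [Prod.ext_iff],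
    condMutualInfo_comp_cond_of_injective μ W₁ Y₂ (fun ω => (U ω, V ω, W₂ ω))
      (f := fun p => (p.2.1, p.1, p.2.2)) fun p q h => by simp_all [Prod.ext_iff]] at hY₂
  linarith

theorem stmt_2
    {Ω : Type*} [MeasurableSpace Ω] (μ : Measure Ω) [IsProbabilityMeasure μ]
    {SU SV SW₁ SW₂ SY₁ SY₂ : Type*}
    [Fintype SU] [MeasurableSpace SU] [MeasurableSingletonClass SU] [Fintype SV] [MeasurableSpace SV] [MeasurableSingletonClass SV] [Fintype SW₁] [MeasurableSpace SW₁] [MeasurableSingletonClass SW₁] [Fintype SW₂] [MeasurableSpace SW₂] [MeasurableSingletonClass SW₂] [Fintype SY₁] [MeasurableSpace SY₁] [MeasurableSingletonClass SY₁] [Fintype SY₂] [MeasurableSpace SY₂] [MeasurableSingletonClass SY₂]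
    (U : Ω → SU) (V : Ω → SV) (W₁ : Ω → SW₁) (W₂ : Ω → SW₂) (Y₁ : Ω → SY₁) (Y₂ : Ω → SY₂)
    (hU : Measurable U) (hV : Measurable V) (hW₁ : Measurable W₁) (hW₂ : Measurable W₂) (hY₁ : Measurable Y₁) (hY₂ : Measurable Y₂)
    (h0 : condMutualInfo μ W₂ Y₁ (fun ω => (U ω, W₁ ω)) = condMutualInfo μ W₁ Y₂ (fun ω => (U ω, W₂ ω)))
    (h1 : condMutualInfo μ V Y₂ (fun ω => (U ω, W₂ ω)) = condMutualInfo μ V Y₂ W₂)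
    : mutualInfo μ (fun ω => (U ω, W₁ ω, W₂ ω)) Y₁ + condMutualInfo μ V Y₂ (fun ω => (U ω, W₁ ω, W₂ ω)) = mutualInfo μ W₁ Y₁ + condMutualInfo μ U Y₁ W₁ + condMutualInfo μ W₁ Y₂ (fun ω => (U ω, V ω, W₂ ω)) + condMutualInfo μ V Y₂ W₂ :=
  stmt_2_general μ U V W₁ W₂ Y₁ Y₂ h0 h1
end

section
/- Let U, V, W₁, W₂, Y₁, Y₂ be random variables on a common probability space taking values in finite sets. If I(W₂;Y₁|(U,W₁)) = I(W₁;Y₂|(U,W₂)) and I(V;Y₂|(U,W₂)) = I(V;Y₂|W₂), then I(U;Y₁|W₁) + I(V;Y₂|W₂) ≤ I((W₁,W₂);Y₁) + I(U;Y₁|(W₁,W₂)) + I(V;Y₂|(U,W₁,W₂)). -/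
open MeasureTheory Real

/-!
By the chain rule,
`I(W₁,W₂;Y₁) + I(U;Y₁|W₁,W₂) = I(W₁;Y₁) + I(U;Y₁|W₁) + I(W₂;Y₁|U,W₁)` and
`I(W₁;Y₂|U,W₂) + I(V;Y₂|U,W₁,W₂) = I(V;Y₂|U,W₂) + I(W₁;Y₂|V,U,W₂)`.
The first hypothesis identifies `I(W₂;Y₁|U,W₁)` with `I(W₁;Y₂|U,W₂)`, the second turns
`I(V;Y₂|U,W₂)` into `I(V;Y₂|W₂)`, and the terms `I(W₁;Y₁)` and `I(W₁;Y₂|V,U,W₂)` left over are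
nonnegative. Nonnegativity of conditional mutual information comes from `log x ≤ x - 1`, applied
on each fibre of the conditioning variable.
-/

open Finset

lemma negMulLog_add_mul_log_le {q x : ℝ} (hq : 0 ≤ q) (hx : 0 < x) :
    negMulLog q + q * log x ≤ x - q := by
  rcases hq.eq_or_lt with rfl | hq
  · simpa using hx.le
  · have h := mul_le_mul_of_nonneg_left (log_le_sub_one_of_pos (div_pos hx hq)) hq.le
    rw [log_div hx.ne' hq.ne'] at h
    calc negMulLog q + q * log x = q * (log x - log q) := by rw [negMulLog]; ring
      _ ≤ q * (x / q - 1) := h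
      _ = x - q := by field_simp

/-- Subadditivity of entropy, `H(A,B) ≤ H(A) + H(B)`, for an unnormalized joint weight `q`. -/
lemma negMulLog_sum_add_sum_negMulLog_le {A B : Type*} [Fintype A] [Fintype B]
    (q : A → B → ℝ) (hq : ∀ a b, 0 ≤ q a b) :
    negMulLog (∑ a, ∑ b, q a b) + ∑ a, ∑ b, negMulLog (q a b) ≤
      ∑ a, negMulLog (∑ b, q a b) + ∑ b, negMulLog (∑ a, q a b) := by
  set r : A → ℝ := fun a => ∑ b, q a b
  set s : B → ℝ := fun b => ∑ a, q a b
  set t := ∑ a, ∑ b, q a b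
  have hr : ∀ a, 0 ≤ r a := fun a => sum_nonneg fun b _ => hq a b
  have hs : ∀ b, 0 ≤ s b := fun b => sum_nonneg fun a _ => hq a b
  have hrt : ∑ a, r a = t := rfl
  have hst : ∑ b, s b = t := sum_comm
  have key : ∀ a b, negMulLog (q a b) + q a b * (log (r a) + log (s b) - log t)
      ≤ r a * s b / t - q a b := by
    intro a b
    rcases (hq a b).eq_or_lt with h | h
    · rw [← h]
      simpa using div_nonneg (mul_nonneg (hr a) (hs b)) (sum_nonneg fun a _ => hr a)
    · have hra : 0 < r a := h.trans_le (single_le_sum (fun b _ => hq a b) (mem_univ b))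
      have hsb : 0 < s b := h.trans_le (single_le_sum (fun a _ => hq a b) (mem_univ a))
      have ht : 0 < t := hra.trans_le (single_le_sum (fun a _ => hr a) (mem_univ a))
      rw [← log_mul hra.ne' hsb.ne', ← log_div (by positivity) ht.ne']
      exact negMulLog_add_mul_log_le h.le (by positivity)
  have hslack : ∑ a, ∑ b, (r a * s b / t - q a b) = 0 := by
    simp only [sum_sub_distrib, ← sum_div, ← mul_sum, ← sum_mul, hst, hrt, mul_self_div_self]
    exact sub_self t
  have hlhs : ∑ a, ∑ b, (negMulLog (q a b) + q a b * (log (r a) + log (s b) - log t))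
      = ∑ a, ∑ b, negMulLog (q a b) - ∑ a, negMulLog (r a) - ∑ b, negMulLog (s b)
        + negMulLog t := by
    have hra : ∑ a, ∑ b, q a b * log (r a) = ∑ a, r a * log (r a) := by simp only [← sum_mul]; rfl
    have hsb : ∑ a, ∑ b, q a b * log (s b) = ∑ b, s b * log (s b) := by
      rw [sum_comm]; simp only [← sum_mul]; rfl
    have ht : ∑ a, ∑ b, q a b * log t = t * log t := by simp only [← sum_mul]; rfl
    simp only [negMulLog, mul_add, mul_sub, sum_add_distrib, sum_sub_distrib, hra, hsb, ht,
      neg_mul, sum_neg_distrib]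
    ring
  linarith [sum_le_sum fun a (_ : a ∈ univ) => sum_le_sum fun b (_ : b ∈ univ) => key a b]

section Entropy

variable {Ω : Type*} [MeasurableSpace Ω] (μ : Measure Ω)

lemma entropy_eq_of_equiv {S T : Type*} [Fintype S] [Fintype T] (e : S ≃ T) {X : Ω → S}
    {Y : Ω → T} (h : ∀ ω, Y ω = e (X ω)) : entropy μ Y = entropy μ X := by
  unfold entropy
  rw [← e.sum_comp]
  refine sum_congr rfl fun s _ => ?_
  congr 3
  ext ω
  simp [h]

lemma entropy_prod_comm {S T : Type*} [Fintype S] [Fintype T] (X : Ω → S) (Y : Ω → T) :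
    entropy μ (fun ω => (X ω, Y ω)) = entropy μ (fun ω => (Y ω, X ω)) :=
  entropy_eq_of_equiv μ (Equiv.prodComm T S) fun _ => rfl

lemma entropy_prod_left_comm {S T R : Type*} [Fintype S] [Fintype T] [Fintype R] (X : Ω → S)
    (Y : Ω → T) (Z : Ω → R) :
    entropy μ (fun ω => (X ω, Y ω, Z ω)) = entropy μ (fun ω => (Y ω, X ω, Z ω)) :=
  entropy_eq_of_equiv μ ⟨fun x => (x.2.1, x.1, x.2.2), fun x => (x.2.1, x.1, x.2.2),
    fun _ => rfl, fun _ => rfl⟩ fun _ => rfl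

lemma condMutualInfo_eq_of_equiv {S T R R' : Type*} [Fintype S] [Fintype T] [Fintype R]
    [Fintype R'] (e : R ≃ R') (X : Ω → S) (Y : Ω → T) {Z : Ω → R} {Z' : Ω → R'}
    (h : ∀ ω, Z' ω = e (Z ω)) : condMutualInfo μ X Y Z' = condMutualInfo μ X Y Z := by
  have hXZ : entropy μ (fun ω => (X ω, Z' ω)) = entropy μ (fun ω => (X ω, Z ω)) :=
    entropy_eq_of_equiv μ ((Equiv.refl S).prodCongr e) fun ω => by simp [h]
  have hYZ : entropy μ (fun ω => (Y ω, Z' ω)) = entropy μ (fun ω => (Y ω, Z ω)) :=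
    entropy_eq_of_equiv μ ((Equiv.refl T).prodCongr e) fun ω => by simp [h]
  have hXYZ : entropy μ (fun ω => (X ω, Y ω, Z' ω)) = entropy μ (fun ω => (X ω, Y ω, Z ω)) :=
    entropy_eq_of_equiv μ ((Equiv.refl S).prodCongr ((Equiv.refl T).prodCongr e))
      fun ω => by simp [h]
  unfold condMutualInfo
  rw [hXZ, hYZ, hXYZ, entropy_eq_of_equiv μ e h]

lemma mutualInfo_prod_left {S T R : Type*} [Fintype S] [Fintype T] [Fintype R] (X : Ω → S)
    (Y : Ω → T) (Z : Ω → R) :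
    mutualInfo μ (fun ω => (X ω, Y ω)) Z = mutualInfo μ X Z + condMutualInfo μ Y Z X := by
  have hYZX : entropy μ (fun ω => (Y ω, Z ω, X ω)) = entropy μ (fun ω => ((X ω, Y ω), Z ω)) :=
    entropy_eq_of_equiv μ ⟨fun x => (x.1.2, x.2, x.1.1), fun x => ((x.2.2, x.1), x.2.1),
      fun _ => rfl, fun _ => rfl⟩ fun _ => rfl
  unfold mutualInfo condMutualInfo
  rw [hYZX, entropy_prod_comm μ Y X, entropy_prod_comm μ Z X]
  ring

/-- Both sides are `I((X,Y);Z|W)`, expanded by the chain rule in the two possible orders. -/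
lemma condMutualInfo_add_condMutualInfo_comm {S T R Q : Type*} [Fintype S] [Fintype T]
    [Fintype R] [Fintype Q] (X : Ω → S) (Y : Ω → T) (Z : Ω → R) (W : Ω → Q) :
    condMutualInfo μ X Z W + condMutualInfo μ Y Z (fun ω => (X ω, W ω))
      = condMutualInfo μ Y Z W + condMutualInfo μ X Z (fun ω => (Y ω, W ω)) := by
  have hYZXW : entropy μ (fun ω => (Y ω, Z ω, X ω, W ω))
      = entropy μ (fun ω => (X ω, Z ω, Y ω, W ω)) :=
    entropy_eq_of_equiv μ ⟨fun x => (x.2.2.1, x.2.1, x.1, x.2.2.2),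
      fun x => (x.2.2.1, x.2.1, x.1, x.2.2.2), fun _ => rfl, fun _ => rfl⟩ fun _ => rfl
  unfold condMutualInfo
  rw [hYZXW, entropy_prod_left_comm μ Z X, entropy_prod_left_comm μ Z Y,
    entropy_prod_left_comm μ Y X]
  ring

lemma measureReal_eq_sum_inter_preimage [IsFiniteMeasure μ] {T : Type*} [Fintype T]
    [MeasurableSpace T] [MeasurableSingletonClass T] {Y : Ω → T} (hY : Measurable Y)
    {E : Set Ω} (hE : MeasurableSet E) : μ.real E = ∑ b, μ.real (E ∩ Y ⁻¹' {b}) := by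
  have hcover : E = ⋃ b, E ∩ Y ⁻¹' {b} := by ext ω; simp
  conv_lhs => rw [hcover]
  exact measureReal_iUnion_fintype
    (fun b b' hb => (pairwise_disjoint_fiber Y hb).mono Set.inter_subset_right
      Set.inter_subset_right)
    (fun b => hE.inter (hY (measurableSet_singleton b)))

variable {S T R : Type*}
  [Fintype S] [MeasurableSpace S] [MeasurableSingletonClass S]
  [Fintype T] [MeasurableSpace T] [MeasurableSingletonClass T]
  [Fintype R] [MeasurableSpace R] [MeasurableSingletonClass R]

lemma condMutualInfo_nonneg [IsFiniteMeasure μ] {X : Ω → S} {Y : Ω → T} {Z : Ω → R}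
    (hX : Measurable X) (hY : Measurable Y) (hZ : Measurable Z) : 0 ≤ condMutualInfo μ X Y Z := by
  set p : S → T → R → ℝ := fun a b c => μ.real ((fun ω => (X ω, Y ω, Z ω)) ⁻¹' {(a, b, c)})
  have hXYZ : ∀ a b c, μ.real ((fun ω => (X ω, Y ω, Z ω)) ⁻¹' {(a, b, c)}) = p a b c :=
    fun _ _ _ => rfl
  have hXZ : ∀ a c, μ.real ((fun ω => (X ω, Z ω)) ⁻¹' {(a, c)}) = ∑ b, p a b c := by
    intro a c
    rw [measureReal_eq_sum_inter_preimage μ hY ((hX.prodMk hZ) (measurableSet_singleton _))]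
    refine sum_congr rfl fun b _ => congrArg μ.real ?_
    ext ω
    simp [and_comm, and_left_comm]
  have hYZ : ∀ b c, μ.real ((fun ω => (Y ω, Z ω)) ⁻¹' {(b, c)}) = ∑ a, p a b c := by
    intro b c
    rw [measureReal_eq_sum_inter_preimage μ hX ((hY.prodMk hZ) (measurableSet_singleton _))]
    refine sum_congr rfl fun a _ => congrArg μ.real ?_
    ext ω
    simp [and_comm]
  have hZc : ∀ c, μ.real (Z ⁻¹' {c}) = ∑ a, ∑ b, p a b c := by
    intro c
    rw [measureReal_eq_sum_inter_preimage μ hX (hZ (measurableSet_singleton c))]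
    refine sum_congr rfl fun a _ => (congrArg μ.real ?_).trans (hXZ a c)
    ext ω
    simp [and_comm]
  have hfibre c := negMulLog_sum_add_sum_negMulLog_le (fun a b => p a b c)
    fun a b => measureReal_nonneg
  have hsum := sum_le_sum fun c (_ : c ∈ univ) => hfibre c
  have hswap : ∑ c, ∑ b, ∑ a, negMulLog (p a b c) = ∑ c, ∑ a, ∑ b, negMulLog (p a b c) :=
    sum_congr rfl fun c _ => sum_comm
  unfold condMutualInfo entropy
  simp only [← measureReal_def, Fintype.sum_prod_type_right, hXYZ, hXZ, hYZ, hZc, hswap]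
  simp only [sum_add_distrib] at hsum
  linarith

lemma mutualInfo_nonneg [IsProbabilityMeasure μ] {X : Ω → S} {Y : Ω → T} (hX : Measurable X)
    (hY : Measurable Y) : 0 ≤ mutualInfo μ X Y := by
  have h := condMutualInfo_nonneg μ hX hY (measurable_const (a := ()))
  have hX1 : entropy μ (fun ω => (X ω, ())) = entropy μ X :=
    entropy_eq_of_equiv μ (Equiv.prodPUnit S).symm fun _ => rfl
  have hY1 : entropy μ (fun ω => (Y ω, ())) = entropy μ Y :=
    entropy_eq_of_equiv μ (Equiv.prodPUnit T).symm fun _ => rfl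
  have hXY1 : entropy μ (fun ω => (X ω, Y ω, ())) = entropy μ (fun ω => (X ω, Y ω)) :=
    entropy_eq_of_equiv μ ((Equiv.refl S).prodCongr (Equiv.prodPUnit T).symm) fun _ => rfl
  have h1 : entropy μ (fun _ => ()) = 0 := by simp [entropy]
  unfold condMutualInfo at h
  rw [hX1, hY1, hXY1, h1, sub_zero] at h
  exact h

end Entropy

theorem stmt_3
    {Ω : Type*} [MeasurableSpace Ω] (μ : Measure Ω) [IsProbabilityMeasure μ]
    {SU SV SW₁ SW₂ SY₁ SY₂ : Type*}
    [Fintype SU] [MeasurableSpace SU] [MeasurableSingletonClass SU] [Fintype SV] [MeasurableSpace SV] [MeasurableSingletonClass SV] [Fintype SW₁] [MeasurableSpace SW₁] [MeasurableSingletonClass SW₁] [Fintype SW₂] [MeasurableSpace SW₂] [MeasurableSingletonClass SW₂] [Fintype SY₁] [MeasurableSpace SY₁] [MeasurableSingletonClass SY₁] [Fintype SY₂] [MeasurableSpace SY₂] [MeasurableSingletonClass SY₂]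
    (U : Ω → SU) (V : Ω → SV) (W₁ : Ω → SW₁) (W₂ : Ω → SW₂) (Y₁ : Ω → SY₁) (Y₂ : Ω → SY₂)
    (hU : Measurable U) (hV : Measurable V) (hW₁ : Measurable W₁) (hW₂ : Measurable W₂) (hY₁ : Measurable Y₁) (hY₂ : Measurable Y₂)
    (h0 : condMutualInfo μ W₂ Y₁ (fun ω => (U ω, W₁ ω)) = condMutualInfo μ W₁ Y₂ (fun ω => (U ω, W₂ ω)))
    (h1 : condMutualInfo μ V Y₂ (fun ω => (U ω, W₂ ω)) = condMutualInfo μ V Y₂ W₂)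
    : condMutualInfo μ U Y₁ W₁ + condMutualInfo μ V Y₂ W₂ ≤ mutualInfo μ (fun ω => (W₁ ω, W₂ ω)) Y₁ + condMutualInfo μ U Y₁ (fun ω => (W₁ ω, W₂ ω)) + condMutualInfo μ V Y₂ (fun ω => (U ω, W₁ ω, W₂ ω)) := by
  have chain₁ : mutualInfo μ (fun ω => (W₁ ω, W₂ ω)) Y₁
        + condMutualInfo μ U Y₁ (fun ω => (W₁ ω, W₂ ω))
      = mutualInfo μ W₁ Y₁ + condMutualInfo μ U Y₁ W₁
        + condMutualInfo μ W₂ Y₁ (fun ω => (U ω, W₁ ω)) := by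
    rw [mutualInfo_prod_left, add_assoc, add_assoc,
      ← condMutualInfo_eq_of_equiv μ (Equiv.prodComm SW₁ SW₂) U Y₁
        (Z' := fun ω => (W₂ ω, W₁ ω)) fun _ => rfl,
      condMutualInfo_add_condMutualInfo_comm]
  have chain₂ : condMutualInfo μ W₁ Y₂ (fun ω => (U ω, W₂ ω))
        + condMutualInfo μ V Y₂ (fun ω => (U ω, W₁ ω, W₂ ω))
      = condMutualInfo μ V Y₂ (fun ω => (U ω, W₂ ω))
        + condMutualInfo μ W₁ Y₂ (fun ω => (V ω, U ω, W₂ ω)) := by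
    rw [← condMutualInfo_eq_of_equiv μ ⟨fun x => (x.2.1, x.1, x.2.2),
      fun x => (x.2.1, x.1, x.2.2), fun _ => rfl, fun _ => rfl⟩ V Y₂
        (Z' := fun ω => (W₁ ω, U ω, W₂ ω)) fun _ => rfl]
    exact condMutualInfo_add_condMutualInfo_comm μ W₁ V Y₂ (fun ω => (U ω, W₂ ω))
  linarith [mutualInfo_nonneg μ hW₁ hY₁,
    condMutualInfo_nonneg μ hW₁ hY₂ (hV.prodMk (hU.prodMk hW₂))]
end

section
/- Let n be a positive integer, let M₁, M₂ be independent random variables, and let Y₁,…,Yₙ be random variables, all on a common probability space and taking values in finite sets. Then ∑_{i=1}^{n} [ I(M₁; Yᵢ | (M₂, Y^{i−1})) − I(M₁; Yᵢ | Y^{i−1}) ] = I(M₁; M₂ | Yⁿ), where Y^{i−1} denotes the tuple (Y₁,…,Y₍ᵢ₋₁₎) and Yⁿ = (Y₁,…,Yₙ); for i = 1 the first term is I(M₁;Y₁|M₂) and the second is I(M₁;Y₁). -/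
open MeasureTheory Real

/-!
Chain rule: `I(X; Yᵢ | W, Y^{i-1}) = H(X | W, Y^{i-1}) - H(X | W, Y^i)`, so both sums telescope.
The first is `H(M₁ | M₂) - H(M₁ | M₂, Yⁿ)`, the second `H(M₁) - H(M₁ | Yⁿ)`, and their difference
is `I(M₁; M₂ | Yⁿ) - I(M₁; M₂)`.
-/

open Function

section Entropy

variable {Ω : Type*} [MeasurableSpace Ω] (μ : Measure Ω)
  {S T U : Type*} [Fintype S] [Fintype T] [Fintype U]

theorem entropy_comp_of_injective (X : Ω → S) {f : S → T} (hf : Injective f) :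
    entropy μ (fun ω => f (X ω)) = entropy μ X := by
  refine (Fintype.sum_of_injective f hf _ _ (fun t ht => ?_) (fun s => ?_)).symm
  · have : (fun ω => f (X ω)) ⁻¹' {t} = ∅ :=
      Set.eq_empty_of_forall_notMem fun ω hω => ht ⟨X ω, hω⟩
    simp [this]
  · congr 3
    ext ω
    simp [hf.eq_iff]

theorem entropy_eq_zero_of_subsingleton [IsProbabilityMeasure μ] [Subsingleton S] (X : Ω → S) :
    entropy μ X = 0 := by
  refine Finset.sum_eq_zero fun s _ => ?_
  rw [show X ⁻¹' {s} = Set.univ from Set.eq_univ_of_forall fun ω => Subsingleton.elim _ _,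
    measure_univ]
  simp

noncomputable def condEntropy (X : Ω → S) (W : Ω → T) : ℝ :=
  entropy μ (fun ω => (X ω, W ω)) - entropy μ W

theorem condEntropy_comp_of_injective (X : Ω → S) (W : Ω → T) {f : T → U} (hf : Injective f) :
    condEntropy μ X (fun ω => f (W ω)) = condEntropy μ X W := by
  unfold condEntropy
  rw [entropy_comp_of_injective μ W hf,
    ← entropy_comp_of_injective μ (fun ω => (X ω, W ω)) (injective_id.prodMap hf)]
  rfl

theorem condEntropy_prod_unique (X : Ω → S) (Z : Ω → T) [Unique U] (W : Ω → U) :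
    condEntropy μ X (fun ω => (Z ω, W ω)) = condEntropy μ X Z := by
  have hW : W = fun _ => default := funext fun _ => Unique.eq_default _
  subst hW
  exact condEntropy_comp_of_injective μ X Z (f := fun z => (z, (default : U)))
    fun _ _ h => congrArg Prod.fst h

theorem condEntropy_of_unique [IsProbabilityMeasure μ] (X : Ω → S) [Unique U] (W : Ω → U) :
    condEntropy μ X W = entropy μ X := by
  have hW : W = fun _ => default := funext fun _ => Unique.eq_default _
  subst hW
  rw [condEntropy, entropy_eq_zero_of_subsingleton μ (fun _ => (default : U)), sub_zero]
  exact entropy_comp_of_injective μ X (f := fun x => (x, (default : U)))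
    fun _ _ h => congrArg Prod.fst h

theorem mutualInfo_eq_entropy_sub_condEntropy (X : Ω → S) (Y : Ω → T) :
    mutualInfo μ X Y = entropy μ X - condEntropy μ X Y := by
  unfold mutualInfo condEntropy
  ring

theorem condMutualInfo_eq_condEntropy_sub (X : Ω → S) (Y : Ω → T) (W : Ω → U) :
    condMutualInfo μ X Y W = condEntropy μ X W - condEntropy μ X (fun ω => (Y ω, W ω)) := by
  unfold condMutualInfo condEntropy
  ring

end Entropy

section ChainRule

variable {Ω : Type*} [MeasurableSpace Ω] (μ : Measure Ω) {S : Type*} [Fintype S]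
  {n : ℕ} {V : Fin n → Type*} [∀ i, Fintype (V i)]

/- Prefixes `Y^{<k}` are indexed by `{j : Fin n // (j : ℕ) < k}` with `k : ℕ`, so that `k = n` is
allowed; for `k = i : Fin n` this is definitionally the type `{j // j < i}` of the statement. -/

theorem sum_condMutualInfo_eq_condEntropy_sub {T : ℕ → Type*} [∀ k, Fintype (T k)]
    (X : Ω → S) (Y : ∀ i, Ω → V i) (W : ∀ k, Ω → T k)
    (f : ∀ i : Fin n, T (i + 1) → V i × T i) (hf : ∀ i, Injective (f i))
    (hW : ∀ i ω, (Y i ω, W i ω) = f i (W (i + 1) ω)) :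
    ∑ i, condMutualInfo μ X (Y i) (W i) = condEntropy μ X (W 0) - condEntropy μ X (W n) := by
  have step : ∀ i : Fin n, condMutualInfo μ X (Y i) (W i)
      = condEntropy μ X (W i) - condEntropy μ X (W (i + 1)) := fun i => by
    rw [condMutualInfo_eq_condEntropy_sub, funext (hW i),
      condEntropy_comp_of_injective μ X _ (hf i)]
  simp only [step]
  rw [Fin.sum_univ_eq_sum_range (fun k => condEntropy μ X (W k) - condEntropy μ X (W (k + 1))),
    Finset.sum_range_sub']

instance : IsEmpty {j : Fin n // (j : ℕ) < 0} := ⟨fun j => Nat.not_lt_zero _ j.2⟩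

omit [∀ i, Fintype (V i)] in
theorem injective_restrict_lt_self :
    Injective fun (g : ∀ j, V j) (j : {j : Fin n // (j : ℕ) < n}) => g j :=
  fun _ _ h => funext fun j => congrFun h ⟨j, j.isLt⟩

def prefixUnsnoc (i : Fin n) (g : ∀ j : {j : Fin n // (j : ℕ) < i + 1}, V j) :
    V i × ∀ j : {j : Fin n // (j : ℕ) < i}, V j :=
  (g ⟨i, Nat.lt_succ_self _⟩, fun j => g ⟨j, Nat.lt_succ_of_lt j.2⟩)

omit [∀ i, Fintype (V i)] in
theorem prefixUnsnoc_injective (i : Fin n) : Injective (prefixUnsnoc (V := V) i) := by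
  intro g g' h
  funext j
  rcases Nat.lt_succ_iff_lt_or_eq.mp j.2 with hj | hj
  · exact congrFun (congrArg Prod.snd h) ⟨j, hj⟩
  · obtain rfl : j = ⟨i, Nat.lt_succ_self _⟩ := Subtype.ext (Fin.ext hj)
    exact congrArg Prod.fst h

theorem sum_condMutualInfo_prefix_prod {R : Type*} [Fintype R]
    (X : Ω → S) (Z : Ω → R) (Y : ∀ i, Ω → V i) :
    ∑ i : Fin n, condMutualInfo μ X (Y i) (fun ω => (Z ω, fun j : {j : Fin n // j < i} => Y j ω))
      = condEntropy μ X Z - condEntropy μ X (fun ω => (Z ω, fun j => Y j ω)) := by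
  have hf (i : Fin n) : Injective fun (p : R × ∀ j : {j : Fin n // (j : ℕ) < i + 1}, V j) =>
      ((prefixUnsnoc i p.2).1, p.1, (prefixUnsnoc i p.2).2) := by
    rintro ⟨z, g⟩ ⟨z', g'⟩ h
    simp only [Prod.mk.injEq] at h
    obtain ⟨h₁, rfl, h₂⟩ := h
    rw [prefixUnsnoc_injective i (Prod.ext h₁ h₂)]
  refine (sum_condMutualInfo_eq_condEntropy_sub μ X Y
    (fun k ω => (Z ω, fun j : {j : Fin n // (j : ℕ) < k} => Y j ω)) _ hf fun _ _ => rfl).trans ?_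
  rw [condEntropy_prod_unique,
    ← condEntropy_comp_of_injective μ X _ (injective_id.prodMap injective_restrict_lt_self)]
  rfl

theorem sum_condMutualInfo_prefix [IsProbabilityMeasure μ] (X : Ω → S) (Y : ∀ i, Ω → V i) :
    ∑ i : Fin n, condMutualInfo μ X (Y i) (fun ω => fun j : {j : Fin n // j < i} => Y j ω)
      = entropy μ X - condEntropy μ X (fun ω => fun j => Y j ω) := by
  refine (sum_condMutualInfo_eq_condEntropy_sub μ X Y
    (fun k ω (j : {j : Fin n // (j : ℕ) < k}) => Y j ω) _ prefixUnsnoc_injective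
    fun _ _ => rfl).trans ?_
  rw [condEntropy_of_unique,
    ← condEntropy_comp_of_injective μ X _ injective_restrict_lt_self]

end ChainRule

theorem stmt_7_general
    {Ω : Type*} [MeasurableSpace Ω] (μ : Measure Ω) [IsProbabilityMeasure μ]
    (n : ℕ)
    {SM₁ SM₂ : Type*}
    [Fintype SM₁] [Fintype SM₂]
    {S : Fin n → Type*}
    [∀ i, Fintype (S i)]
    (M₁ : Ω → SM₁) (M₂ : Ω → SM₂) (Y : ∀ i, Ω → S i)
    (hindep : mutualInfo μ M₁ M₂ = 0) :
    ∑ i : Fin n,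
        (condMutualInfo μ M₁ (Y i)
            (fun ω => (M₂ ω, fun j : {j : Fin n // j < i} => Y j ω))
          - condMutualInfo μ M₁ (Y i) (fun ω => fun j : {j : Fin n // j < i} => Y j ω))
      = condMutualInfo μ M₁ M₂ (fun ω => fun j : Fin n => Y j ω) := by
  rw [Finset.sum_sub_distrib, sum_condMutualInfo_prefix_prod, sum_condMutualInfo_prefix,
    condMutualInfo_eq_condEntropy_sub]
  rw [mutualInfo_eq_entropy_sub_condEntropy] at hindep
  linarith

theorem stmt_7
    {Ω : Type*} [MeasurableSpace Ω] (μ : Measure Ω) [IsProbabilityMeasure μ]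
    (n : ℕ) (hn : 0 < n)
    {SM₁ SM₂ : Type*}
    [Fintype SM₁] [MeasurableSpace SM₁] [MeasurableSingletonClass SM₁]
    [Fintype SM₂] [MeasurableSpace SM₂] [MeasurableSingletonClass SM₂]
    {S : Fin n → Type*}
    [∀ i, Fintype (S i)] [∀ i, MeasurableSpace (S i)] [∀ i, MeasurableSingletonClass (S i)]
    (M₁ : Ω → SM₁) (M₂ : Ω → SM₂) (Y : ∀ i, Ω → S i)
    (hM₁ : Measurable M₁) (hM₂ : Measurable M₂) (hY : ∀ i, Measurable (Y i))
    (hindep : mutualInfo μ M₁ M₂ = 0) :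
    ∑ i : Fin n,
        (condMutualInfo μ M₁ (Y i)
            (fun ω => (M₂ ω, fun j : {j : Fin n // j < i} => Y j ω))
          - condMutualInfo μ M₁ (Y i) (fun ω => fun j : {j : Fin n // j < i} => Y j ω))
      = condMutualInfo μ M₁ M₂ (fun ω => fun j : Fin n => Y j ω) :=
  stmt_7_general μ n M₁ M₂ Y hindep
end
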